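/- arXiv:2306.17144 — 2 statements merged into one kernel-verified Lean document; each statement's English description precedes it below -/
import Mathlib

section
/- Let f : ℝⁿ → ℝ, g : ℝⁿ → ℝ ∪ {+∞} proper, κ ≥ 0, and for i = 1,…,p let Ψ_i : ℝⁿ → ℝ^{m_i} be differentiable with L_i-Lipschitz derivative (in operator norm), and let c_i : ℝ^{m_i} → ℝ ∪ {+∞} be proper convex. Fix x ∈ ℝⁿ with g(x) < +∞, y_i ∈ ℝ^{m_i} with c_i(y_i) < +∞, γ > 0 and μ_i > 0, and let v ∈ ℝⁿ satisfy the κ-descent inequality for f at x. Suppose x̂ minimizes u ↦ g(u) + (1/(2γ))‖u − (x + γ Σ_{i=1}^p DΨ_i(x)* y_i − γ v)‖² over ℝⁿ, and for each i, ŷ_i minimizes u ↦ c_i(u) + (1/(2μ_i))‖u − (y_i + μ_i Ψ_i(x̂))‖² over ℝ^{m_i}. Define Φ(x,y) := f(x) + g(x) + Σ_{i=1}^p (c_i(y_i) − ⟨Ψ_i(x), y_i⟩), d := x̂ − x and e_i := ŷ_i − y_i. Then Φ(x̂, ŷ) ≤ Φ(x, y) − (1/(2γ) − κ − (1/2)Σ_{i=1}^p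 L_i‖y_i‖)‖d‖² − Σ_{i=1}^p (1/μ_i)‖e_i‖². -/
/-!
Add up four one-step estimates, all in the real numbers once `g` and the `c i` are known to be
finite at the points involved: the descent inequality for `f` at `x`; the prox inequality for `g`
tested at `x`, which yields `-‖d‖²/(2γ) - ⟪v, d⟫ + ∑ ⟪y i, DΨᵢ(x) d⟫`; for each `i` the prox
inequality for the convex `c i` tested at `y i` (the residual `(z - ŷᵢ)/μᵢ` is a subgradient of
`c i` at `ŷᵢ`), which yields `-‖eᵢ‖²/μᵢ`; and the quadratic Taylor bound
`‖Ψᵢ x̂ - Ψᵢ x - DΨᵢ(x) d‖ ≤ Lᵢ/2 ‖d‖²` that absorbs the linearisation error against `y i`.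
-/

open scoped BigOperators RealInnerProductSpace
open Filter Topology

@[norm_cast]
theorem EReal.coe_finsetSum {ι : Type*} (s : Finset ι) (f : ι → ℝ) :
    ((∑ i ∈ s, f i : ℝ) : EReal) = ∑ i ∈ s, (f i : EReal) :=
  map_sum (⟨⟨Real.toEReal, EReal.coe_zero⟩, EReal.coe_add⟩ : ℝ →+ EReal) f s

section Taylor

variable {E F : Type*} [NormedAddCommGroup E] [NormedSpace ℝ E]

theorem norm_sub_sub_fderiv_le_of_lipschitz_fderiv [NormedAddCommGroup F] [NormedSpace ℝ F]
    {f : E → F} (hf : Differentiable ℝ f) {L : ℝ}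
    (hlip : ∀ a b, ‖fderiv ℝ f a - fderiv ℝ f b‖ ≤ L * ‖a - b‖) (x x' : E) :
    ‖f x' - f x - fderiv ℝ f x (x' - x)‖ ≤ L / 2 * ‖x' - x‖ ^ 2 := by
  set d := x' - x
  set r : ℝ → F := fun t => f (x + t • d) - f x - t • fderiv ℝ f x d
  have hr : ∀ t : ℝ, HasDerivAt r (fderiv ℝ f (x + t • d) d - fderiv ℝ f x d) t := by
    intro t
    have hline : HasDerivAt (fun t : ℝ => x + t • d) d t := by
      simpa using ((hasDerivAt_id t).smul_const d).const_add x
    have hlin : HasDerivAt (fun t : ℝ => t • fderiv ℝ f x d) (fderiv ℝ f x d) t := by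
      simpa using (hasDerivAt_id t).smul_const (fderiv ℝ f x d)
    exact (((hf _).hasFDerivAt.comp_hasDerivAt t hline).sub_const (f x)).sub hlin
  have hB : ∀ t : ℝ, HasDerivAt (fun t : ℝ => L * ‖d‖ ^ 2 * t ^ 2 / 2) (L * ‖d‖ ^ 2 * t) t :=
    fun t => (((hasDerivAt_pow 2 t).const_mul (L * ‖d‖ ^ 2)).div_const 2).congr_deriv (by ring)
  have hbound : ∀ t ∈ Set.Ico (0 : ℝ) 1,
      ‖fderiv ℝ f (x + t • d) d - fderiv ℝ f x d‖ ≤ L * ‖d‖ ^ 2 * t := by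
    intro t ht
    calc ‖fderiv ℝ f (x + t • d) d - fderiv ℝ f x d‖
        ≤ ‖fderiv ℝ f (x + t • d) - fderiv ℝ f x‖ * ‖d‖ :=
          (fderiv ℝ f (x + t • d) - fderiv ℝ f x).le_opNorm d
      _ ≤ L * ‖t • d‖ * ‖d‖ := by
          gcongr
          simpa using hlip (x + t • d) x
      _ = L * ‖d‖ ^ 2 * t := by rw [norm_smul, Real.norm_of_nonneg ht.1]; ring
  have hremainder := image_norm_le_of_norm_deriv_right_le_deriv_boundary
    (fun t _ => (hr t).continuousAt.continuousWithinAt) (fun t _ => (hr t).hasDerivWithinAt)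
    (by simp [r]) hB hbound (Set.right_mem_Icc.2 zero_le_one)
  simpa [r, d, mul_div_right_comm] using hremainder

theorem inner_add_fderiv_sub_inner_le_of_lipschitz_fderiv [NormedAddCommGroup F]
    [InnerProductSpace ℝ F] {f : E → F} (hf : Differentiable ℝ f) {L : ℝ}
    (hlip : ∀ a b, ‖fderiv ℝ f a - fderiv ℝ f b‖ ≤ L * ‖a - b‖) (x x' : E) (y : F) :
    ⟪f x + fderiv ℝ f x (x' - x), y⟫ - ⟪f x', y⟫ ≤ L / 2 * ‖x' - x‖ ^ 2 * ‖y‖ := by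
  rw [← inner_sub_left]
  calc ⟪f x + fderiv ℝ f x (x' - x) - f x', y⟫
      ≤ ‖f x + fderiv ℝ f x (x' - x) - f x'‖ * ‖y‖ := real_inner_le_norm _ _
    _ = ‖f x' - f x - fderiv ℝ f x (x' - x)‖ * ‖y‖ := by rw [← norm_neg]; congr 2; abel
    _ ≤ L / 2 * ‖x' - x‖ ^ 2 * ‖y‖ := by
        gcongr
        exact norm_sub_sub_fderiv_le_of_lipschitz_fderiv hf hlip x x'

end Taylor

theorem le_of_forall_mem_Ioc_le_add_mul {a b c : ℝ}
    (h : ∀ t ∈ Set.Ioc (0 : ℝ) 1, a ≤ b + t * c) : a ≤ b := by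
  have hlim : Tendsto (fun t : ℝ => b + t * c) (𝓝[>] 0) (𝓝 b) := by
    have : Continuous fun t : ℝ => b + t * c := by fun_prop
    simpa using (this.tendsto 0).mono_left nhdsWithin_le_nhds
  exact ge_of_tendsto hlim (eventually_of_mem (Ioc_mem_nhdsGT one_pos) h)

section Prox

variable {E : Type*} [NormedAddCommGroup E]

/-- `p ∈ prox_{t h}(z)`, i.e. `p` minimizes `h + ‖· - z‖² / (2t)`. -/
def IsProxPoint (h : E → EReal) (t : ℝ) (z p : E) : Prop :=
  ∀ u, h p + (((1 / (2 * t)) * ‖p - z‖ ^ 2 : ℝ) : EReal)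
    ≤ h u + (((1 / (2 * t)) * ‖u - z‖ ^ 2 : ℝ) : EReal)

def ERealConvex [Module ℝ E] (h : E → EReal) : Prop :=
  ∀ u v : E, ∀ a b : ℝ, 0 ≤ a → 0 ≤ b → a + b = 1 →
    h (a • u + b • v) ≤ (a : EReal) * h u + (b : EReal) * h v

namespace IsProxPoint

variable {h : E → EReal} {t : ℝ} {z p : E}

theorem ne_top (hp : IsProxPoint h t z p) {u : E} (hu : h u ≠ ⊤) : h p ≠ ⊤ := by
  intro hpt
  have := hp u
  rw [hpt, EReal.top_add_coe, top_le_iff] at this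
  exact EReal.add_ne_top hu (EReal.coe_ne_top _) this

theorem le_of_coe (hp : IsProxPoint h t z p) {a b : ℝ} {u : E} (ha : h p = a) (hb : h u = b) :
    a + 1 / (2 * t) * ‖p - z‖ ^ 2 ≤ b + 1 / (2 * t) * ‖u - z‖ ^ 2 := by
  exact_mod_cast ha ▸ hb ▸ hp u

variable [InnerProductSpace ℝ E]

theorem le_sub_inner {x q : E} (hp : IsProxPoint h t (x - t • q) p) (ht : 0 < t) {a b : ℝ}
    (hxa : h x = a) (hpb : h p = b) :
    b ≤ a - 1 / (2 * t) * ‖p - x‖ ^ 2 - ⟪q, p - x⟫ := by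
  have hle := hp.le_of_coe hpb hxa
  have hsplit : p - (x - t • q) = (p - x) + t • q := by abel
  rw [hsplit, norm_add_sq_real, sub_sub_cancel, real_inner_smul_right, real_inner_comm] at hle
  have : 1 / (2 * t) * (2 * (t * ⟪q, p - x⟫)) = ⟪q, p - x⟫ := by field_simp
  linarith

/-- Compare `p` with the points `p + s • (u - p)` of the segment towards `u`: after dividing by
`s`, the first-order term survives as `s → 0`. -/
theorem add_inner_le_of_convex (hp : IsProxPoint h t z p) (hconv : ERealConvex h)
    {a b : ℝ} {u : E} (hpa : h p = a) (hub : h u = b) :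
    a + 1 / t * ⟪z - p, u - p⟫ ≤ b := by
  refine le_of_forall_mem_Ioc_le_add_mul (c := 1 / (2 * t) * ‖u - p‖ ^ 2) fun s hs => ?_
  have hconv_s : h ((1 - s) • p + s • u) ≤ (((1 - s) * a + s * b : ℝ) : EReal) := by
    have := hconv p u (1 - s) s (by linarith [hs.2]) hs.1.le (by ring)
    rwa [hpa, hub, ← EReal.coe_mul, ← EReal.coe_mul, ← EReal.coe_add] at this
  have hprox : a + 1 / (2 * t) * ‖p - z‖ ^ 2
      ≤ (1 - s) * a + s * b + 1 / (2 * t) * ‖(1 - s) • p + s • u - z‖ ^ 2 := by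
    have := (hp ((1 - s) • p + s • u)).trans (add_le_add_left hconv_s _)
    rw [hpa] at this
    exact_mod_cast this
  have hsplit : (1 - s) • p + s • u - z = (p - z) + s • (u - p) := by
    rw [sub_smul, one_smul, smul_sub]; abel
  rw [hsplit, norm_add_sq_real, real_inner_smul_right, norm_smul,
    Real.norm_of_nonneg hs.1.le] at hprox
  have hscaled : s * (a + 1 / t * ⟪z - p, u - p⟫)
      ≤ s * (b + s * (1 / (2 * t) * ‖u - p‖ ^ 2)) := by
    rw [← neg_sub p z, inner_neg_left]
    linear_combination hprox
  exact le_of_mul_le_mul_left hscaled hs.1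

theorem sub_inner_le_of_convex {y w : E} (hp : IsProxPoint h t (y + t • w) p) (ht : 0 < t)
    (hconv : ERealConvex h) {a b : ℝ} (hya : h y = a) (hpb : h p = b) :
    b - ⟪w, p⟫ ≤ a - ⟪w, y⟫ - 1 / t * ‖p - y‖ ^ 2 := by
  have hle := hp.add_inner_le_of_convex hconv hpb hya
  have hsplit : y + t • w - p = (y - p) + t • w := by abel
  rw [hsplit, inner_add_left, real_inner_self_eq_norm_sq, real_inner_smul_left, inner_sub_right,
    norm_sub_rev, mul_add, ← mul_assoc, one_div_mul_cancel ht.ne', one_mul] at hle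
  linarith

end IsProxPoint

end Prox

theorem double_prox_step_decrease_general {n p : ℕ} {m : Fin p → ℕ}
    (f : EuclideanSpace ℝ (Fin n) → ℝ)
    (g : EuclideanSpace ℝ (Fin n) → EReal)
    (hg_ne_bot : ∀ u, g u ≠ ⊥)
    (κ : ℝ)
    (Ψ : ∀ i, EuclideanSpace ℝ (Fin n) → EuclideanSpace ℝ (Fin (m i)))
    (L : Fin p → ℝ)
    (hΨdiff : ∀ i, Differentiable ℝ (Ψ i))
    (hΨlip : ∀ i, ∀ a b : EuclideanSpace ℝ (Fin n),
      ‖fderiv ℝ (Ψ i) a - fderiv ℝ (Ψ i) b‖ ≤ L i * ‖a - b‖)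
    (c : ∀ i, EuclideanSpace ℝ (Fin (m i)) → EReal)
    (hc_ne_bot : ∀ i u, c i u ≠ ⊥)
    (hc_convex : ∀ i, ∀ u v : EuclideanSpace ℝ (Fin (m i)), ∀ a b : ℝ,
      0 ≤ a → 0 ≤ b → a + b = 1 →
        c i (a • u + b • v) ≤ (a : EReal) * c i u + (b : EReal) * c i v)
    (x : EuclideanSpace ℝ (Fin n)) (hx : g x < ⊤)
    (y : ∀ i, EuclideanSpace ℝ (Fin (m i))) (hy : ∀ i, c i (y i) < ⊤)
    (γ : ℝ) (hγ0 : 0 < γ) (μ : Fin p → ℝ) (hμ0 : ∀ i, 0 < μ i)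
    (v : EuclideanSpace ℝ (Fin n))
    (hv : ∀ z, f z ≤ f x + ⟪v, z - x⟫ + κ * ‖z - x‖ ^ 2)
    (xh : EuclideanSpace ℝ (Fin n))
    (hxh : ∀ u : EuclideanSpace ℝ (Fin n),
      g xh + (((1 / (2 * γ)) *
          ‖xh - (x + γ • ∑ i, (ContinuousLinearMap.adjoint (fderiv ℝ (Ψ i) x)) (y i)
            - γ • v)‖ ^ 2 : ℝ) : EReal)
        ≤ g u + (((1 / (2 * γ)) *
          ‖u - (x + γ • ∑ i, (ContinuousLinearMap.adjoint (fderiv ℝ (Ψ i) x)) (y i)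
            - γ • v)‖ ^ 2 : ℝ) : EReal))
    (yh : ∀ i, EuclideanSpace ℝ (Fin (m i)))
    (hyh : ∀ i, ∀ u : EuclideanSpace ℝ (Fin (m i)),
      c i (yh i) + (((1 / (2 * μ i)) * ‖yh i - (y i + (μ i) • Ψ i xh)‖ ^ 2 : ℝ) : EReal)
        ≤ c i u + (((1 / (2 * μ i)) * ‖u - (y i + (μ i) • Ψ i xh)‖ ^ 2 : ℝ) : EReal)) :
    ((f xh : ℝ) : EReal) + g xh + ∑ i, (c i (yh i) - ((⟪Ψ i xh, yh i⟫ : ℝ) : EReal))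
      ≤ ((f x : ℝ) : EReal) + g x + ∑ i, (c i (y i) - ((⟪Ψ i x, y i⟫ : ℝ) : EReal))
        - (((1 / (2 * γ) - κ - (1 / 2) * ∑ i, L i * ‖y i‖) * ‖xh - x‖ ^ 2
            + ∑ i, (1 / μ i) * ‖yh i - y i‖ ^ 2 : ℝ) : EReal) := by
  obtain ⟨gx, hgx⟩ := CanLift.prf (β := ℝ) (g x) ⟨hx.ne, hg_ne_bot x⟩
  obtain ⟨gxh, hgxh⟩ :=
    CanLift.prf (β := ℝ) (g xh) ⟨IsProxPoint.ne_top hxh hx.ne, hg_ne_bot xh⟩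
  choose C hC using fun i => CanLift.prf (β := ℝ) (c i (y i)) ⟨(hy i).ne, hc_ne_bot i _⟩
  choose Ch hCh using fun i =>
    CanLift.prf (β := ℝ) (c i (yh i)) ⟨IsProxPoint.ne_top (hyh i) (hy i).ne, hc_ne_bot i _⟩
  have hprimal : gxh ≤ gx - 1 / (2 * γ) * ‖xh - x‖ ^ 2 - ⟪v, xh - x⟫
      + ∑ i, ⟪y i, fderiv ℝ (Ψ i) x (xh - x)⟫ := by
    have hz : x + γ • ∑ i, (fderiv ℝ (Ψ i) x).adjoint (y i) - γ • v
        = x - γ • (v - ∑ i, (fderiv ℝ (Ψ i) x).adjoint (y i)) := by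
      rw [smul_sub]; abel
    have := IsProxPoint.le_sub_inner (hz ▸ hxh) hγ0 hgx.symm hgxh.symm
    simp only [inner_sub_left, sum_inner, ContinuousLinearMap.adjoint_inner_left] at this
    linarith
  have hdual : ∀ i, Ch i - ⟪Ψ i xh, yh i⟫ ≤ C i - ⟪Ψ i x, y i⟫ - ⟪y i, fderiv ℝ (Ψ i) x (xh - x)⟫
      + 1 / 2 * (L i * ‖y i‖) * ‖xh - x‖ ^ 2 - 1 / μ i * ‖yh i - y i‖ ^ 2 := fun i => by
    have hprox := IsProxPoint.sub_inner_le_of_convex (hyh i) (hμ0 i) (hc_convex i)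
      (hC i).symm (hCh i).symm
    have htaylor :=
      inner_add_fderiv_sub_inner_le_of_lipschitz_fderiv (hΨdiff i) (hΨlip i) x xh (y i)
    rw [inner_add_left] at htaylor
    linarith [real_inner_comm (y i) (fderiv ℝ (Ψ i) x (xh - x))]
  have hsum := Finset.sum_le_sum fun i (_ : i ∈ Finset.univ) => hdual i
  have hreal : f xh + gxh + ∑ i, (Ch i - ⟪Ψ i xh, yh i⟫) ≤ f x + gx + ∑ i, (C i - ⟪Ψ i x, y i⟫)
      - ((1 / (2 * γ) - κ - 1 / 2 * ∑ i, L i * ‖y i‖) * ‖xh - x‖ ^ 2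
        + ∑ i, 1 / μ i * ‖yh i - y i‖ ^ 2) := by
    simp only [Finset.sum_sub_distrib, Finset.sum_add_distrib, ← Finset.sum_mul,
      ← Finset.mul_sum] at hsum ⊢
    linarith [hv xh]
  simp only [← hgx, ← hgxh, ← hC, ← hCh]
  exact_mod_cast hreal

/-- Proposition 3.6, inequality (3.16): the double-proximal subgradient step decreases the
primal-dual objective `Φ` (valued in `ℝ ∪ {+∞}`, encoded in `EReal`). -/
theorem double_prox_step_decrease {n p : ℕ} {m : Fin p → ℕ}
    (f : EuclideanSpace ℝ (Fin n) → ℝ)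
    (g : EuclideanSpace ℝ (Fin n) → EReal)
    (hg_ne_bot : ∀ u, g u ≠ ⊥) (hg_proper : ∃ u, g u ≠ ⊤)
    (κ : ℝ) (hκ : 0 ≤ κ)
    (Ψ : ∀ i, EuclideanSpace ℝ (Fin n) → EuclideanSpace ℝ (Fin (m i)))
    (L : Fin p → ℝ)
    (hΨdiff : ∀ i, Differentiable ℝ (Ψ i))
    (hΨlip : ∀ i, ∀ a b : EuclideanSpace ℝ (Fin n),
      ‖fderiv ℝ (Ψ i) a - fderiv ℝ (Ψ i) b‖ ≤ L i * ‖a - b‖)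
    (c : ∀ i, EuclideanSpace ℝ (Fin (m i)) → EReal)
    (hc_ne_bot : ∀ i u, c i u ≠ ⊥) (hc_proper : ∀ i, ∃ u, c i u ≠ ⊤)
    (hc_convex : ∀ i, ∀ u v : EuclideanSpace ℝ (Fin (m i)), ∀ a b : ℝ,
      0 ≤ a → 0 ≤ b → a + b = 1 →
        c i (a • u + b • v) ≤ (a : EReal) * c i u + (b : EReal) * c i v)
    (x : EuclideanSpace ℝ (Fin n)) (hx : g x < ⊤)
    (y : ∀ i, EuclideanSpace ℝ (Fin (m i))) (hy : ∀ i, c i (y i) < ⊤)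
    (γ : ℝ) (hγ0 : 0 < γ) (μ : Fin p → ℝ) (hμ0 : ∀ i, 0 < μ i)
    (v : EuclideanSpace ℝ (Fin n))
    (hv : ∀ z, f z ≤ f x + ⟪v, z - x⟫ + κ * ‖z - x‖ ^ 2)
    (xh : EuclideanSpace ℝ (Fin n))
    (hxh : ∀ u : EuclideanSpace ℝ (Fin n),
      g xh + (((1 / (2 * γ)) *
          ‖xh - (x + γ • ∑ i, (ContinuousLinearMap.adjoint (fderiv ℝ (Ψ i) x)) (y i)
            - γ • v)‖ ^ 2 : ℝ) : EReal)
        ≤ g u + (((1 / (2 * γ)) *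
          ‖u - (x + γ • ∑ i, (ContinuousLinearMap.adjoint (fderiv ℝ (Ψ i) x)) (y i)
            - γ • v)‖ ^ 2 : ℝ) : EReal))
    (yh : ∀ i, EuclideanSpace ℝ (Fin (m i)))
    (hyh : ∀ i, ∀ u : EuclideanSpace ℝ (Fin (m i)),
      c i (yh i) + (((1 / (2 * μ i)) * ‖yh i - (y i + (μ i) • Ψ i xh)‖ ^ 2 : ℝ) : EReal)
        ≤ c i u + (((1 / (2 * μ i)) * ‖u - (y i + (μ i) • Ψ i xh)‖ ^ 2 : ℝ) : EReal)) :
    ((f xh : ℝ) : EReal) + g xh + ∑ i, (c i (yh i) - ((⟪Ψ i xh, yh i⟫ : ℝ) : EReal))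
      ≤ ((f x : ℝ) : EReal) + g x + ∑ i, (c i (y i) - ((⟪Ψ i x, y i⟫ : ℝ) : EReal))
        - (((1 / (2 * γ) - κ - (1 / 2) * ∑ i, L i * ‖y i‖) * ‖xh - x‖ ^ 2
            + ∑ i, (1 / μ i) * ‖yh i - y i‖ ^ 2 : ℝ) : EReal) :=
  double_prox_step_decrease_general f g hg_ne_bot κ Ψ L hΨdiff hΨlip c hc_ne_bot hc_convex x hx y hy
    γ hγ0 μ hμ0 v hv xh hxh yh hyh
end

section
/- Let σ ≥ 0, let (Δ_k)_{k∈ℕ} be a sequence of nonnegative reals, and let (s_k)_{k∈ℕ} be a nonincreasing sequence of nonnegative reals. Fix k₀ ∈ ℕ and suppose that Δ_{k+1} ≤ √(σ (s_k − s_{k+1}) Δ_k) for every k ≥ k₀. Then for every K ≥ k₀, Σ_{k=k₀}^{K} Δ_k ≤ 2Δ_{k₀} + σ s_{k₀}; in particular the series Σ_{k=k₀}^{∞} Δ_k converges with sum at most 2Δ_{k₀} + σ s_{k₀}. -/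
/-!
By AM-GM the recursion gives `2 Δ_{k+1} ≤ Δ_k + σ (s_k - s_{k+1})`. Summing from `k₀` shows that
`∑_{k₀ ≤ k ≤ K} Δ_k + Δ_K + σ s_K` never exceeds its value `2 Δ_{k₀} + σ s_{k₀}` at `K = k₀`,
and the last two terms are nonnegative.
-/

open Finset

theorem Real.sqrt_mul_le_half_add {x y : ℝ} (hx : 0 ≤ x) (hy : 0 ≤ y) :
    √(x * y) ≤ (x + y) / 2 :=
  Real.sqrt_le_iff.mpr ⟨by positivity, by nlinarith [sq_nonneg (x - y)]⟩

section Telescoping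

variable {a b : ℕ → ℝ} {k₀ : ℕ}

theorem sum_Icc_add_add_le_of_two_mul_succ_le
    (h : ∀ k, k₀ ≤ k → 2 * a (k + 1) ≤ a k + (b k - b (k + 1))) :
    ∀ K, k₀ ≤ K → ∑ k ∈ Icc k₀ K, a k + a K + b K ≤ 2 * a k₀ + b k₀ := by
  intro K hK
  induction K, hK using Nat.le_induction with
  | base => simp only [Icc_self, sum_singleton]; linarith
  | succ K hK ih =>
    rw [sum_Icc_succ_top (by omega)]
    linarith [h K hK]

theorem sum_Icc_le_of_two_mul_succ_le (ha : ∀ k, 0 ≤ a k) (hb : ∀ k, 0 ≤ b k)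
    (h : ∀ k, k₀ ≤ k → 2 * a (k + 1) ≤ a k + (b k - b (k + 1))) (K : ℕ) (hK : k₀ ≤ K) :
    ∑ k ∈ Icc k₀ K, a k ≤ 2 * a k₀ + b k₀ := by
  linarith [sum_Icc_add_add_le_of_two_mul_succ_le h K hK, ha K, hb K]

end Telescoping

theorem summable_and_tsum_le_of_sum_Icc_le {f : ℕ → ℝ} (hf : ∀ k, 0 ≤ f k) {k₀ : ℕ} {C : ℝ}
    (h : ∀ K, k₀ ≤ K → ∑ k ∈ Icc k₀ K, f k ≤ C) :
    Summable (fun j => f (k₀ + j)) ∧ ∑' j, f (k₀ + j) ≤ C := by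
  have hrange : ∀ n, ∑ j ∈ range n, f (k₀ + j) ≤ C := fun n =>
    calc ∑ j ∈ range n, f (k₀ + j) = ∑ k ∈ Ico k₀ (k₀ + n), f k := by
          rw [sum_Ico_eq_sum_range, Nat.add_sub_cancel_left]
      _ ≤ ∑ k ∈ Icc k₀ (k₀ + n), f k :=
          sum_le_sum_of_subset_of_nonneg Ico_subset_Icc_self fun k _ _ => hf k
      _ ≤ C := h _ (Nat.le_add_right _ _)
  exact ⟨summable_of_sum_range_le (fun _ => hf _) hrange,
    Real.tsum_le_of_sum_range_le (fun _ => hf _) hrange⟩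

/-- Claim 3 / inequality (3.28) in the KL convergence proof of the Boosted Double-proximal
Subgradient Algorithm: under the square-root recursion, the step lengths are summable with
sum at most `2Δ_{k₀} + σ s_{k₀}`. -/
theorem kl_summability_estimate (σ : ℝ) (hσ : 0 ≤ σ)
    (Δ : ℕ → ℝ) (hΔ : ∀ k, 0 ≤ Δ k)
    (s : ℕ → ℝ) (hs_mono : ∀ k, s (k + 1) ≤ s k) (hs_nonneg : ∀ k, 0 ≤ s k)
    (k₀ : ℕ)
    (hrec : ∀ k, k₀ ≤ k → Δ (k + 1) ≤ Real.sqrt (σ * (s k - s (k + 1)) * Δ k)) :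
    (∀ K, k₀ ≤ K → ∑ k ∈ Finset.Icc k₀ K, Δ k ≤ 2 * Δ k₀ + σ * s k₀)
      ∧ Summable (fun j : ℕ => Δ (k₀ + j))
      ∧ (∑' j : ℕ, Δ (k₀ + j)) ≤ 2 * Δ k₀ + σ * s k₀ := by
  have hstep : ∀ k, k₀ ≤ k → 2 * Δ (k + 1) ≤ Δ k + (σ * s k - σ * s (k + 1)) := by
    intro k hk
    have hdrop : 0 ≤ σ * (s k - s (k + 1)) := mul_nonneg hσ (sub_nonneg.mpr (hs_mono k))
    linarith [hrec k hk, Real.sqrt_mul_le_half_add hdrop (hΔ k)]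
  have hbound := sum_Icc_le_of_two_mul_succ_le hΔ (fun k => mul_nonneg hσ (hs_nonneg k)) hstep
  exact ⟨hbound, summable_and_tsum_le_of_sum_Icc_le hΔ hbound⟩
end
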